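/- arXiv:1506.03407 — 2 statements merged into one kernel-verified Lean document; each statement's English description precedes it below -/
import Mathlib

section
/- Under the assumptions that nP(x) > 3 for all x ∈ X and |[W₁](x̂₁|x) − W₁(x̂₁|x)| ≤ 1/(nP(x)) for all x, x̂₁, the conditional entropies satisfy |H(X̂₁|X) − H([X̂₁]|X)| ≤ (|X|·|X̂₁|/n) log n, where (X, X̂₁) has joint law P × W₁ and (X, [X̂₁]) has joint law P × [W₁]. -/
open Real Finset

/-- `p log p - q log q ≤ p - q` for `0 ≤ q ≤ p ≤ 1`. -/
private lemma tau_diff_le1 {p q : ℝ} (hq : 0 ≤ q) (hp : p ≤ 1) (hqp : q ≤ p) :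
    p * Real.log p - q * Real.log q ≤ p - q := by
  have hp0 : 0 ≤ p := hq.trans hqp
  have hlogp : Real.log p ≤ 0 := Real.log_nonpos hp0 hp
  rcases eq_or_lt_of_le hq with h | hq
  · rw [← h]
    simp only [Real.log_zero, mul_zero, zero_mul, sub_zero]
    nlinarith [mul_nonpos_of_nonneg_of_nonpos hp0 hlogp]
  · have hp' : 0 < p := lt_of_lt_of_le hq hqp
    have h1 : Real.log (p / q) ≤ p / q - 1 :=
      Real.log_le_sub_one_of_pos (div_pos hp' hq)
    rw [Real.log_div (ne_of_gt hp') (ne_of_gt hq)] at h1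
    have h2 : q * (Real.log p - Real.log q) ≤ q * (p / q - 1) :=
      mul_le_mul_of_nonneg_left h1 hq.le
    have h3 : q * (p / q - 1) = p - q := by field_simp
    nlinarith [mul_nonpos_of_nonneg_of_nonpos (sub_nonneg.mpr hqp) hlogp]

/-- Subadditivity of `t ↦ -t log t` on nonnegative reals. -/
private lemma tau_add_le {q d : ℝ} (hq : 0 ≤ q) (hd : 0 ≤ d) :
    -(q + d) * Real.log (q + d) ≤ -q * Real.log q + -d * Real.log d := by
  rcases eq_or_lt_of_le hq with h | hq
  · rw [← h]; simp
  rcases eq_or_lt_of_le hd with h | hd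
  · rw [← h]; simp
  have hqd : 0 < q + d := by linarith
  have h1 : Real.log q ≤ Real.log (q + d) := Real.log_le_log hq (by linarith)
  have h2 : Real.log d ≤ Real.log (q + d) := Real.log_le_log hd (by linarith)
  nlinarith [mul_le_mul_of_nonneg_left h1 hq.le, mul_le_mul_of_nonneg_left h2 hd.le]

/-- Monotonicity of `t ↦ -t log t` on `[0, e⁻¹]`. -/
private lemma tau_mono {a b : ℝ} (ha : 0 ≤ a) (hab : a ≤ b) (hb : Real.log b ≤ -1) :
    -a * Real.log a ≤ -b * Real.log b := by
  have hb0 : 0 < b := by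
    rcases lt_or_ge 0 b with h | h
    · exact h
    · exfalso
      have hb' : b = 0 := le_antisymm h (ha.trans hab)
      rw [hb', Real.log_zero] at hb; linarith
  rcases eq_or_lt_of_le ha with h | ha
  · rw [← h]
    simp only [neg_zero, zero_mul, Real.log_zero, mul_zero]
    nlinarith
  · have h1 : Real.log (b / a) ≤ b / a - 1 :=
      Real.log_le_sub_one_of_pos (div_pos hb0 ha)
    rw [Real.log_div (ne_of_gt hb0) (ne_of_gt ha)] at h1
    have h2 : a * (Real.log b - Real.log a) ≤ a * (b / a - 1) :=
      mul_le_mul_of_nonneg_left h1 ha.le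
    have h3 : a * (b / a - 1) = b - a := by field_simp
    nlinarith [mul_le_mul_of_nonneg_left hb (sub_nonneg.mpr hab)]

/-- Key pointwise bound, case `q ≤ p`. -/
private lemma key' {p q ε : ℝ} (hq0 : 0 ≤ q) (hp1 : p ≤ 1) (hqp : q ≤ p)
    (hd : p - q ≤ ε) (hε : Real.log ε ≤ -1) :
    |(-p * Real.log p) - (-q * Real.log q)| ≤ -ε * Real.log ε := by
  have hε0 : 0 < ε := by
    rcases lt_or_ge 0 ε with h | h
    · exact h
    · exfalso
      rcases eq_or_lt_of_le h with h' | h'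
      · rw [h', Real.log_zero] at hε; linarith
      · linarith [sub_nonneg.mpr hqp]
  rw [abs_sub_le_iff]
  constructor
  · -- τ p - τ q ≤ τ (p - q) ≤ τ ε
    have h1 : -p * Real.log p ≤ -q * Real.log q + -(p - q) * Real.log (p - q) := by
      have := tau_add_le hq0 (sub_nonneg.mpr hqp)
      rwa [add_sub_cancel] at this
    have h2 : -(p - q) * Real.log (p - q) ≤ -ε * Real.log ε :=
      tau_mono (sub_nonneg.mpr hqp) hd hε
    linarith
  · -- τ q - τ p ≤ p - q ≤ ε ≤ ε (- log ε)
    have h1 : p * Real.log p - q * Real.log q ≤ p - q := tau_diff_le1 hq0 hp1 hqp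
    nlinarith

/-- Key pointwise bound. -/
private lemma key {p q ε : ℝ} (hp0 : 0 ≤ p) (hp1 : p ≤ 1) (hq0 : 0 ≤ q) (hq1 : q ≤ 1)
    (hd : |p - q| ≤ ε) (hε : Real.log ε ≤ -1) :
    |(-p * Real.log p) - (-q * Real.log q)| ≤ -ε * Real.log ε := by
  rcases le_total q p with h | h
  · exact key' hq0 hp1 h (by rwa [abs_of_nonneg (sub_nonneg.mpr h)] at hd) hε
  · rw [abs_sub_comm]
    refine key' hp0 hq1 h ?_ hε
    rwa [abs_sub_comm, abs_of_nonneg (sub_nonneg.mpr h)] at hd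

/-- Conditional entropy bound:
`|H(X̂₁|X) − H([X̂₁]|X)| ≤ (|X|·|X̂₁|/n) log n`. -/
theorem conditional_entropy_gap_bound {X X1 : Type*} [Fintype X] [Fintype X1]
    (n : ℕ)
    (P : X → ℝ) (hP0 : ∀ x, 0 ≤ P x) (hP1 : ∑ x, P x = 1)
    (hnP : ∀ x, 3 < (n : ℝ) * P x)
    (W W' : X → X1 → ℝ)
    (hW0 : ∀ x y, 0 ≤ W x y) (hW1 : ∀ x, ∑ y, W x y = 1)
    (hW'0 : ∀ x y, 0 ≤ W' x y) (hW'1 : ∀ x, ∑ y, W' x y = 1)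
    (hclose : ∀ x y, |W' x y - W x y| ≤ 1 / ((n : ℝ) * P x)) :
    |(∑ x, P x * ∑ y, (-(W x y) * Real.log (W x y)))
        - (∑ x, P x * ∑ y, (-(W' x y) * Real.log (W' x y)))|
      ≤ ((Fintype.card X * Fintype.card X1 : ℝ) / n) * Real.log n := by
  have hPpos : ∀ x, 0 < P x := by
    intro x
    by_contra h
    push_neg at h
    have := hnP x
    nlinarith [Nat.cast_nonneg (α := ℝ) n]
  have hPle1 : ∀ x, P x ≤ 1 := by
    intro x
    rw [← hP1]
    exact Finset.single_le_sum (fun i _ => hP0 i) (Finset.mem_univ x)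
  have hXne : Nonempty X := by
    by_contra h
    rw [not_nonempty_iff] at h
    simp [Finset.univ_eq_empty] at hP1
  obtain ⟨x₀⟩ := hXne
  have hn3 : (3 : ℝ) < n := by nlinarith [hnP x₀, hPpos x₀, hPle1 x₀]
  have hn0 : (0 : ℝ) < n := by linarith
  have hlogn : 0 ≤ Real.log n := Real.log_nonneg (by linarith)
  have hWle1 : ∀ x y, W x y ≤ 1 := fun x y => by
    rw [← hW1 x]; exact Finset.single_le_sum (fun i _ => hW0 x i) (Finset.mem_univ y)
  have hW'le1 : ∀ x y, W' x y ≤ 1 := fun x y => by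
    rw [← hW'1 x]; exact Finset.single_le_sum (fun i _ => hW'0 x i) (Finset.mem_univ y)
  have hnPpos : ∀ x, 0 < (n : ℝ) * P x := fun x => by nlinarith [hnP x]
  have hlog3 : (1 : ℝ) ≤ Real.log 3 := by
    rw [Real.le_log_iff_exp_le (by norm_num)]
    exact le_of_lt (lt_trans Real.exp_one_lt_d9 (by norm_num))
  have hεlog : ∀ x, Real.log (1 / ((n : ℝ) * P x)) ≤ -1 := by
    intro x
    rw [one_div, Real.log_inv]
    have : Real.log 3 ≤ Real.log ((n : ℝ) * P x) :=
      Real.log_le_log (by norm_num) (le_of_lt (hnP x))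
    linarith
  -- per-x bound
  have hxbound : ∀ x : X,
      |P x * ∑ y, (-(W x y) * Real.log (W x y)) -
        P x * ∑ y, (-(W' x y) * Real.log (W' x y))|
      ≤ (Fintype.card X1 : ℝ) * (Real.log n / n) := by
    intro x
    set ε : ℝ := 1 / ((n : ℝ) * P x) with hεdef
    have hεpos : 0 < ε := div_pos one_pos (hnPpos x)
    have hterm : ∀ y : X1,
        |(-(W x y) * Real.log (W x y)) - (-(W' x y) * Real.log (W' x y))|
          ≤ -ε * Real.log ε := by
      intro y
      refine key (hW0 x y) (hWle1 x y) (hW'0 x y) (hW'le1 x y) ?_ (hεlog x)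
      rw [abs_sub_comm]
      exact hclose x y
    have h1 : |∑ y, ((-(W x y) * Real.log (W x y)) - (-(W' x y) * Real.log (W' x y)))|
        ≤ (Fintype.card X1 : ℝ) * (-ε * Real.log ε) := by
      calc |∑ y, ((-(W x y) * Real.log (W x y)) - (-(W' x y) * Real.log (W' x y)))|
          ≤ ∑ y, |(-(W x y) * Real.log (W x y)) - (-(W' x y) * Real.log (W' x y))| :=
            Finset.abs_sum_le_sum_abs _ _
        _ ≤ ∑ _y : X1, (-ε * Real.log ε) := Finset.sum_le_sum (fun y _ => hterm y)
        _ = (Fintype.card X1 : ℝ) * (-ε * Real.log ε) := by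
            rw [Finset.sum_const, Finset.card_univ, nsmul_eq_mul]
    have h2 : P x * (-ε * Real.log ε) ≤ Real.log n / n := by
      have hle : Real.log ((n : ℝ) * P x) ≤ Real.log n := by
        rw [← mul_one (n : ℝ)]
        exact Real.log_le_log (by rw [mul_one]; exact hnPpos x)
          (by rw [mul_one]; nlinarith [hPle1 x, hPpos x])
      have hlogε : Real.log ε = -Real.log ((n : ℝ) * P x) := by
        rw [hεdef, one_div, Real.log_inv]
      have hPε : P x * ε = 1 / n := by
        rw [hεdef]
        field_simp [ne_of_gt hn0, ne_of_gt (hPpos x)]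
      calc P x * (-ε * Real.log ε) = (P x * ε) * (-Real.log ε) := by ring
        _ = (1 / n) * Real.log ((n : ℝ) * P x) := by rw [hPε, hlogε]; ring
        _ ≤ (1 / n) * Real.log n := by
            apply mul_le_mul_of_nonneg_left hle
            positivity
        _ = Real.log n / n := by ring
    calc |P x * ∑ y, (-(W x y) * Real.log (W x y)) -
          P x * ∑ y, (-(W' x y) * Real.log (W' x y))|
        = P x * |∑ y, ((-(W x y) * Real.log (W x y)) - (-(W' x y) * Real.log (W' x y)))| := by
          rw [← mul_sub, ← Finset.sum_sub_distrib, abs_mul, abs_of_nonneg (hP0 x)]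
      _ ≤ P x * ((Fintype.card X1 : ℝ) * (-ε * Real.log ε)) :=
          mul_le_mul_of_nonneg_left h1 (hP0 x)
      _ = (Fintype.card X1 : ℝ) * (P x * (-ε * Real.log ε)) := by ring
      _ ≤ (Fintype.card X1 : ℝ) * (Real.log n / n) :=
          mul_le_mul_of_nonneg_left h2 (Nat.cast_nonneg _)
  calc |(∑ x, P x * ∑ y, (-(W x y) * Real.log (W x y)))
        - (∑ x, P x * ∑ y, (-(W' x y) * Real.log (W' x y)))|
      = |∑ x, (P x * ∑ y, (-(W x y) * Real.log (W x y)) -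
          P x * ∑ y, (-(W' x y) * Real.log (W' x y)))| := by
        rw [Finset.sum_sub_distrib]
    _ ≤ ∑ x, |P x * ∑ y, (-(W x y) * Real.log (W x y)) -
          P x * ∑ y, (-(W' x y) * Real.log (W' x y))| := Finset.abs_sum_le_sum_abs _ _
    _ ≤ ∑ _x : X, (Fintype.card X1 : ℝ) * (Real.log n / n) :=
        Finset.sum_le_sum (fun x _ => hxbound x)
    _ = (Fintype.card X : ℝ) * ((Fintype.card X1 : ℝ) * (Real.log n / n)) := by
        rw [Finset.sum_const, Finset.card_univ, nsmul_eq_mul]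
    _ = ((Fintype.card X * Fintype.card X1 : ℝ) / n) * Real.log n := by ring
end

section
/- Under the assumptions that nP(x) > 3 for all x ∈ X, |[W₁](x̂₁|x) − W₁(x̂₁|x)| ≤ 1/(nP(x)), and |[W₂](x̂₂|x,x̂₁) − W₂(x̂₂|x,x̂₁)| ≤ 1/(n[W₁](x̂₁|x)P(x)) for all x, x̂₁, x̂₂, the mutual informations satisfy |I(X; X̂₁, X̂₂) − I(X; [X̂₁], [X̂₂])| ≤ (4|X|·|X̂₁|·|X̂₂|/n) log n. -/
/-- Ordered case of the entropy-difference bound. -/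
lemma mi_key_aux {p q D L : ℝ} (hq0 : 0 ≤ q) (hqp : q ≤ p) (hp1 : p ≤ 1)
    (hpq : p - q ≤ D) (hL : 1 ≤ L) (hDL : -Real.log D ≤ L) :
    |p * Real.log p - q * Real.log q| ≤ D * L := by
  have hp0 : 0 ≤ p := le_trans hq0 hqp
  set d := p - q with hd
  have hd0 : 0 ≤ d := sub_nonneg.2 hqp
  have hD0 : 0 ≤ D := le_trans hd0 hpq
  have hDL' : D ≤ D * L := by nlinarith
  -- upper part: p log p - q log q ≤ d
  have hupper : p * Real.log p - q * Real.log q ≤ d := by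
    rcases eq_or_lt_of_le hq0 with hq | hq
    · have h1 : p * Real.log p ≤ 0 :=
        mul_nonpos_of_nonneg_of_nonpos hp0 (Real.log_nonpos hp0 hp1)
      simp [← hq]
      linarith
    · have hppos : 0 < p := lt_of_lt_of_le hq hqp
      have h1 : Real.log p - Real.log q ≤ p / q - 1 := by
        have := Real.log_le_sub_one_of_pos (show 0 < p / q by positivity)
        rwa [Real.log_div hppos.ne' hq.ne'] at this
      have h2 : q * (Real.log p - Real.log q) ≤ p - q := by
        have := mul_le_mul_of_nonneg_left h1 hq0
        have hq' : q * (p / q - 1) = p - q := by field_simp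
        linarith [hq' ▸ this]
      have h3 : d * Real.log p ≤ 0 :=
        mul_nonpos_of_nonneg_of_nonpos hd0 (Real.log_nonpos hp0 hp1)
      have h4 : p * Real.log p = q * Real.log p + d * Real.log p := by rw [hd]; ring
      linarith
  -- lower part: q log q - p log p ≤ -d log d
  have hlower : q * Real.log q - p * Real.log p ≤ -d * Real.log d := by
    have hqa : q * Real.log q ≤ q * Real.log p := by
      rcases eq_or_lt_of_le hq0 with hq | hq
      · simp [← hq]
      · exact mul_le_mul_of_nonneg_left
          (Real.log_le_log hq hqp) hq0
    have hda : d * Real.log d ≤ d * Real.log p := by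
      rcases eq_or_lt_of_le hd0 with h | h
      · simp [← h]
      · have hdp : d ≤ p := by linarith
        exact mul_le_mul_of_nonneg_left (Real.log_le_log h hdp) hd0
    have h4 : p * Real.log p = q * Real.log p + d * Real.log p := by rw [hd]; ring
    linarith
  -- bound -d log d ≤ D * L
  have hkey : -d * Real.log d ≤ D * L := by
    rcases eq_or_lt_of_le hd0 with h | h
    · rw [← h]; nlinarith
    · have hDpos : 0 < D := lt_of_lt_of_le h hpq
      have e1 : Real.log D - Real.log d ≤ D / d - 1 := by
        have := Real.log_le_sub_one_of_pos (show 0 < D / d by positivity)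
        rwa [Real.log_div hDpos.ne' h.ne'] at this
      have e2 : d * (Real.log D - Real.log d) ≤ D - d := by
        have := mul_le_mul_of_nonneg_left e1 hd0
        have hq' : d * (D / d - 1) = D - d := by field_simp
        linarith [hq' ▸ this]
      -- so -d log d ≤ D - d - d log D
      have e3 : -d * Real.log d ≤ D - d - d * Real.log D := by nlinarith
      rcases le_or_gt 1 (-Real.log D) with hcase | hcase
      · nlinarith [mul_nonneg (sub_nonneg.2 hpq) (by linarith : (0:ℝ) ≤ -Real.log D - 1),
          mul_nonneg hD0 (by linarith : (0:ℝ) ≤ L + Real.log D)]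
      · -- D > 1/e, use -d log d ≤ exp (-1)
        have hx : Real.log d⁻¹ ≤ d⁻¹ * Real.exp (-1) := by
          have := Real.log_le_sub_one_of_pos
            (show 0 < d⁻¹ * Real.exp (-1) by positivity)
          rw [Real.log_mul (by positivity) (Real.exp_ne_zero _), Real.log_exp] at this
          linarith
        have h1e : -d * Real.log d ≤ Real.exp (-1) := by
          have h2 := mul_le_mul_of_nonneg_left hx hd0
          rw [Real.log_inv] at h2
          have h3 : d * (d⁻¹ * Real.exp (-1)) = Real.exp (-1) := by field_simp
          nlinarith
        have hD1e : Real.exp (-1) < D := by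
          have : Real.exp (-1) < Real.exp (Real.log D) := Real.exp_lt_exp.2 (by linarith)
          rwa [Real.exp_log hDpos] at this
        linarith
  rw [abs_le]
  constructor <;> linarith

lemma mi_key {p q D L : ℝ} (hp0 : 0 ≤ p) (hp1 : p ≤ 1) (hq0 : 0 ≤ q) (hq1 : q ≤ 1)
    (hpq : |p - q| ≤ D) (hL : 1 ≤ L) (hDL : -Real.log D ≤ L) :
    |p * Real.log p - q * Real.log q| ≤ D * L := by
  rcases le_total q p with h | h
  · exact mi_key_aux hq0 h hp1
      (by rwa [abs_of_nonneg (sub_nonneg.2 h)] at hpq) hL hDL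
  · rw [abs_sub_comm]
    exact mi_key_aux hp0 h hq1
      (by rwa [abs_sub_comm, abs_of_nonneg (sub_nonneg.2 h)] at hpq) hL hDL

/-- Mutual information gap bound:
`|I(X; X̂₁, X̂₂) − I(X; [X̂₁], [X̂₂])| ≤ (4|X|·|X̂₁|·|X̂₂|/n) log n`. -/
theorem mutual_information_gap_bound {X X1 X2 : Type*}
    [Fintype X] [Fintype X1] [Fintype X2] (n : ℕ)
    (P : X → ℝ) (hP0 : ∀ x, 0 ≤ P x) (hP1 : ∑ x, P x = 1)
    (hnP : ∀ x, 3 < (n : ℝ) * P x)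
    (W1 W1' : X → X1 → ℝ) (W2 W2' : X → X1 → X2 → ℝ)
    (hW10 : ∀ x y, 0 ≤ W1 x y) (hW11 : ∀ x, ∑ y, W1 x y = 1)
    (hW1'0 : ∀ x y, 0 ≤ W1' x y) (hW1'1 : ∀ x, ∑ y, W1' x y = 1)
    (hW20 : ∀ x y z, 0 ≤ W2 x y z) (hW21 : ∀ x y, ∑ z, W2 x y z = 1)
    (hW2'0 : ∀ x y z, 0 ≤ W2' x y z) (hW2'1 : ∀ x y, ∑ z, W2' x y z = 1)
    (hclose1 : ∀ x y, |W1' x y - W1 x y| ≤ 1 / ((n : ℝ) * P x))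
    (hclose2 : ∀ x y z,
      |W2' x y z - W2 x y z| ≤ 1 / ((n : ℝ) * W1' x y * P x)) :
    |(((-∑ y, ∑ z, (∑ x, P x * W1 x y * W2 x y z) *
            Real.log (∑ x, P x * W1 x y * W2 x y z))
        - ∑ x, P x * (-∑ y, ∑ z, W1 x y * W2 x y z *
            Real.log (W1 x y * W2 x y z))))
      - (((-∑ y, ∑ z, (∑ x, P x * W1' x y * W2' x y z) *
            Real.log (∑ x, P x * W1' x y * W2' x y z))
        - ∑ x, P x * (-∑ y, ∑ z, W1' x y * W2' x y z *
            Real.log (W1' x y * W2' x y z))))|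
      ≤ (4 * (Fintype.card X * Fintype.card X1 * Fintype.card X2 : ℝ) / n) *
          Real.log n := by
  classical
  -- basic positivity facts
  have hXne : Nonempty X := by
    by_contra h
    rw [not_nonempty_iff] at h
    rw [Finset.univ_eq_empty, Finset.sum_empty] at hP1
    norm_num at hP1
  have hPle1 : ∀ x, P x ≤ 1 := by
    intro x
    calc P x ≤ ∑ x, P x := Finset.single_le_sum (fun i _ => hP0 i) (Finset.mem_univ x)
      _ = 1 := hP1
  have hPpos : ∀ x, 0 < P x := by
    intro x
    by_contra h
    push_neg at h
    nlinarith [hnP x, mul_nonpos_of_nonneg_of_nonpos (Nat.cast_nonneg (α := ℝ) n) h]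
  have hn3 : (3:ℝ) < n := by
    obtain ⟨x⟩ := hXne
    nlinarith [hnP x, hPle1 x, Nat.cast_nonneg (α := ℝ) n]
  have hn0 : (0:ℝ) < n := by linarith
  have hn4 : (4:ℝ) ≤ n := by
    have h1 : 3 < n := by exact_mod_cast hn3
    have h2 : 4 ≤ n := by omega
    exact_mod_cast h2
  set L := Real.log n with hLdef
  have hL : 1 ≤ L := by
    rw [hLdef, Real.le_log_iff_exp_le hn0]
    calc Real.exp 1 ≤ 2.7182818286 := (Real.exp_one_lt_d9).le
      _ ≤ (n:ℝ) := by norm_num; linarith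
  -- entries bounded by 1
  have hW1le1 : ∀ x y, W1 x y ≤ 1 := fun x y => by
    calc W1 x y ≤ ∑ y, W1 x y := Finset.single_le_sum (fun i _ => hW10 x i) (Finset.mem_univ y)
      _ = 1 := hW11 x
  have hW1'le1 : ∀ x y, W1' x y ≤ 1 := fun x y => by
    calc W1' x y ≤ ∑ y, W1' x y := Finset.single_le_sum (fun i _ => hW1'0 x i) (Finset.mem_univ y)
      _ = 1 := hW1'1 x
  have hW2le1 : ∀ x y z, W2 x y z ≤ 1 := fun x y z => by
    calc W2 x y z ≤ ∑ z, W2 x y z := Finset.single_le_sum (fun i _ => hW20 x y i) (Finset.mem_univ z)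
      _ = 1 := hW21 x y
  have hW2'le1 : ∀ x y z, W2' x y z ≤ 1 := fun x y z => by
    calc W2' x y z ≤ ∑ z, W2' x y z := Finset.single_le_sum (fun i _ => hW2'0 x y i) (Finset.mem_univ z)
      _ = 1 := hW2'1 x y
  -- central closeness estimate for products
  have hWdiff : ∀ x y z,
      |W1' x y * W2' x y z - W1 x y * W2 x y z| ≤ 2 / ((n:ℝ) * P x) := by
    intro x y z
    have hnP0 : (0:ℝ) < n * P x := mul_pos hn0 (hPpos x)
    have h1 : |W1' x y - W1 x y| * W2 x y z ≤ 1 / ((n:ℝ) * P x) := by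
      calc |W1' x y - W1 x y| * W2 x y z ≤ |W1' x y - W1 x y| * 1 :=
            mul_le_mul_of_nonneg_left (hW2le1 x y z) (abs_nonneg _)
        _ = |W1' x y - W1 x y| := mul_one _
        _ ≤ 1 / ((n:ℝ) * P x) := hclose1 x y
    have h2 : W1' x y * |W2' x y z - W2 x y z| ≤ 1 / ((n:ℝ) * P x) := by
      rcases eq_or_lt_of_le (hW1'0 x y) with h | h
      · rw [← h, zero_mul]
        exact le_of_lt (one_div_pos.mpr hnP0)
      · have hpos2 : (0:ℝ) < (n:ℝ) * W1' x y * P x :=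
          mul_pos (mul_pos hn0 h) (hPpos x)
        calc W1' x y * |W2' x y z - W2 x y z|
            ≤ W1' x y * (1 / ((n:ℝ) * W1' x y * P x)) :=
              mul_le_mul_of_nonneg_left (hclose2 x y z) (le_of_lt h)
          _ = 1 / ((n:ℝ) * P x) := by
              rw [mul_one_div, div_eq_div_iff hpos2.ne' hnP0.ne']
              ring
    calc |W1' x y * W2' x y z - W1 x y * W2 x y z|
        = |(W1' x y - W1 x y) * W2 x y z + W1' x y * (W2' x y z - W2 x y z)| := by
          ring_nf
      _ ≤ |(W1' x y - W1 x y) * W2 x y z| + |W1' x y * (W2' x y z - W2 x y z)| :=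
          abs_add_le _ _
      _ = |W1' x y - W1 x y| * W2 x y z + W1' x y * |W2' x y z - W2 x y z| := by
          rw [abs_mul, abs_mul, abs_of_nonneg (hW20 x y z), abs_of_nonneg (hW1'0 x y)]
      _ ≤ 1 / ((n:ℝ) * P x) + 1 / ((n:ℝ) * P x) := add_le_add h1 h2
      _ = 2 / ((n:ℝ) * P x) := by ring
  -- bounds on the output distributions
  have hQ0 : ∀ (y : X1) (z : X2), 0 ≤ ∑ x, P x * W1 x y * W2 x y z := fun y z =>
    Finset.sum_nonneg fun x _ => mul_nonneg (mul_nonneg (hP0 x) (hW10 x y)) (hW20 x y z)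
  have hQ'0 : ∀ (y : X1) (z : X2), 0 ≤ ∑ x, P x * W1' x y * W2' x y z := fun y z =>
    Finset.sum_nonneg fun x _ => mul_nonneg (mul_nonneg (hP0 x) (hW1'0 x y)) (hW2'0 x y z)
  have hQ1 : ∀ (y : X1) (z : X2), (∑ x, P x * W1 x y * W2 x y z) ≤ 1 := by
    intro y z
    calc ∑ x, P x * W1 x y * W2 x y z ≤ ∑ x, P x := Finset.sum_le_sum fun x _ => by
          nlinarith [hP0 x, hW10 x y, hW20 x y z, hW1le1 x y, hW2le1 x y z,
            mul_nonneg (hP0 x) (hW10 x y)]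
      _ = 1 := hP1
  have hQ'1 : ∀ (y : X1) (z : X2), (∑ x, P x * W1' x y * W2' x y z) ≤ 1 := by
    intro y z
    calc ∑ x, P x * W1' x y * W2' x y z ≤ ∑ x, P x := Finset.sum_le_sum fun x _ => by
          nlinarith [hP0 x, hW1'0 x y, hW2'0 x y z, hW1'le1 x y, hW2'le1 x y z,
            mul_nonneg (hP0 x) (hW1'0 x y)]
      _ = 1 := hP1
  set cX : ℝ := (Fintype.card X : ℝ) with hcXdef
  set cX1 : ℝ := (Fintype.card X1 : ℝ) with hcX1def
  set cX2 : ℝ := (Fintype.card X2 : ℝ) with hcX2def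
  have hcX1' : (1:ℝ) ≤ cX := by
    rw [hcXdef]
    exact_mod_cast Fintype.card_pos
  -- distance between output distributions
  have hQdiff : ∀ (y : X1) (z : X2),
      |(∑ x, P x * W1' x y * W2' x y z) - ∑ x, P x * W1 x y * W2 x y z|
        ≤ 2 * cX / n := by
    intro y z
    rw [← Finset.sum_sub_distrib]
    calc |∑ x, (P x * W1' x y * W2' x y z - P x * W1 x y * W2 x y z)|
        ≤ ∑ x, |P x * W1' x y * W2' x y z - P x * W1 x y * W2 x y z| :=
          Finset.abs_sum_le_sum_abs _ _
      _ ≤ ∑ _x : X, 2 / (n:ℝ) := by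
          refine Finset.sum_le_sum fun x _ => ?_
          have heq : P x * W1' x y * W2' x y z - P x * W1 x y * W2 x y z
              = P x * (W1' x y * W2' x y z - W1 x y * W2 x y z) := by ring
          rw [heq, abs_mul, abs_of_nonneg (hP0 x)]
          calc P x * |W1' x y * W2' x y z - W1 x y * W2 x y z|
              ≤ P x * (2 / ((n:ℝ) * P x)) :=
                mul_le_mul_of_nonneg_left (hWdiff x y z) (hP0 x)
            _ = 2 / n := by
                field_simp [(hPpos x).ne', hn0.ne']
      _ = cX * (2 / n) := by
          rw [Finset.sum_const, Finset.card_univ, nsmul_eq_mul]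
      _ = 2 * cX / n := by ring
  -- log bounds for the two deltas
  have hDL1 : -Real.log (2 * cX / n) ≤ L := by
    rw [Real.log_div (by norm_num; linarith : 2 * cX ≠ 0) hn0.ne']
    have h1 : 0 ≤ Real.log (2 * cX) := Real.log_nonneg (by linarith)
    rw [hLdef]
    linarith
  have hDL2 : ∀ x, -Real.log (2 / ((n:ℝ) * P x)) ≤ L := by
    intro x
    have hnPx : (0:ℝ) < (n:ℝ) * P x := mul_pos hn0 (hPpos x)
    rw [Real.log_div (by norm_num : (2:ℝ) ≠ 0) hnPx.ne']
    have h1 : Real.log ((n:ℝ) * P x) ≤ Real.log n :=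
      Real.log_le_log hnPx (by nlinarith [hPle1 x])
    have h2 : 0 ≤ Real.log 2 := Real.log_nonneg one_le_two
    rw [hLdef]
    linarith
  -- per-term bounds
  have hterm1 : ∀ (y : X1) (z : X2),
      |(∑ x, P x * W1' x y * W2' x y z) * Real.log (∑ x, P x * W1' x y * W2' x y z)
        - (∑ x, P x * W1 x y * W2 x y z) * Real.log (∑ x, P x * W1 x y * W2 x y z)|
        ≤ 2 * cX / n * L := fun y z =>
    mi_key (hQ'0 y z) (hQ'1 y z) (hQ0 y z) (hQ1 y z) (hQdiff y z) hL hDL1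
  have hterm2 : ∀ (x : X) (y : X1) (z : X2),
      P x * |W1 x y * W2 x y z * Real.log (W1 x y * W2 x y z)
        - W1' x y * W2' x y z * Real.log (W1' x y * W2' x y z)|
        ≤ 2 / n * L := by
    intro x y z
    have hW0 : 0 ≤ W1 x y * W2 x y z := mul_nonneg (hW10 x y) (hW20 x y z)
    have hWle : W1 x y * W2 x y z ≤ 1 := by
      nlinarith [hW10 x y, hW20 x y z, hW1le1 x y, hW2le1 x y z]
    have hW'0 : 0 ≤ W1' x y * W2' x y z := mul_nonneg (hW1'0 x y) (hW2'0 x y z)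
    have hW'le : W1' x y * W2' x y z ≤ 1 := by
      nlinarith [hW1'0 x y, hW2'0 x y z, hW1'le1 x y, hW2'le1 x y z]
    have hd : |W1 x y * W2 x y z - W1' x y * W2' x y z| ≤ 2 / ((n:ℝ) * P x) := by
      rw [abs_sub_comm]
      exact hWdiff x y z
    have h := mi_key hW0 hWle hW'0 hW'le hd hL (hDL2 x)
    calc P x * |W1 x y * W2 x y z * Real.log (W1 x y * W2 x y z)
          - W1' x y * W2' x y z * Real.log (W1' x y * W2' x y z)|
        ≤ P x * (2 / ((n:ℝ) * P x) * L) := mul_le_mul_of_nonneg_left h (hP0 x)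
      _ = 2 / n * L := by
          field_simp [(hPpos x).ne', hn0.ne']
  -- split the difference of mutual informations
  have hsplit : (((-∑ y, ∑ z, (∑ x, P x * W1 x y * W2 x y z) *
            Real.log (∑ x, P x * W1 x y * W2 x y z))
        - ∑ x, P x * (-∑ y, ∑ z, W1 x y * W2 x y z *
            Real.log (W1 x y * W2 x y z))))
      - (((-∑ y, ∑ z, (∑ x, P x * W1' x y * W2' x y z) *
            Real.log (∑ x, P x * W1' x y * W2' x y z))
        - ∑ x, P x * (-∑ y, ∑ z, W1' x y * W2' x y z *
            Real.log (W1' x y * W2' x y z))))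
      = (∑ y, ∑ z, ((∑ x, P x * W1' x y * W2' x y z) *
            Real.log (∑ x, P x * W1' x y * W2' x y z)
          - (∑ x, P x * W1 x y * W2 x y z) *
            Real.log (∑ x, P x * W1 x y * W2 x y z)))
        + ∑ x, P x * (∑ y, ∑ z, (W1 x y * W2 x y z * Real.log (W1 x y * W2 x y z)
          - W1' x y * W2' x y z * Real.log (W1' x y * W2' x y z))) := by
    simp only [mul_neg, Finset.sum_neg_distrib, mul_sub, Finset.sum_sub_distrib]
    ring
  rw [hsplit]
  have hS1 : |∑ y, ∑ z, ((∑ x, P x * W1' x y * W2' x y z) *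
            Real.log (∑ x, P x * W1' x y * W2' x y z)
          - (∑ x, P x * W1 x y * W2 x y z) *
            Real.log (∑ x, P x * W1 x y * W2 x y z))|
      ≤ cX1 * cX2 * (2 * cX / n * L) := by
    calc |∑ y, ∑ z, ((∑ x, P x * W1' x y * W2' x y z) *
            Real.log (∑ x, P x * W1' x y * W2' x y z)
          - (∑ x, P x * W1 x y * W2 x y z) *
            Real.log (∑ x, P x * W1 x y * W2 x y z))|
        ≤ ∑ y, |∑ z, ((∑ x, P x * W1' x y * W2' x y z) *
            Real.log (∑ x, P x * W1' x y * W2' x y z)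
          - (∑ x, P x * W1 x y * W2 x y z) *
            Real.log (∑ x, P x * W1 x y * W2 x y z))| := Finset.abs_sum_le_sum_abs _ _
      _ ≤ ∑ y, ∑ z, |(∑ x, P x * W1' x y * W2' x y z) *
            Real.log (∑ x, P x * W1' x y * W2' x y z)
          - (∑ x, P x * W1 x y * W2 x y z) *
            Real.log (∑ x, P x * W1 x y * W2 x y z)| :=
          Finset.sum_le_sum fun y _ => Finset.abs_sum_le_sum_abs _ _
      _ ≤ ∑ _y : X1, ∑ _z : X2, 2 * cX / n * L :=
          Finset.sum_le_sum fun y _ => Finset.sum_le_sum fun z _ => hterm1 y z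
      _ = cX1 * cX2 * (2 * cX / n * L) := by
          simp [Finset.sum_const, Finset.card_univ, nsmul_eq_mul]
          ring
  have hS2 : |∑ x, P x * (∑ y, ∑ z, (W1 x y * W2 x y z * Real.log (W1 x y * W2 x y z)
          - W1' x y * W2' x y z * Real.log (W1' x y * W2' x y z)))|
      ≤ cX * (cX1 * cX2 * (2 / n * L)) := by
    calc |∑ x, P x * (∑ y, ∑ z, (W1 x y * W2 x y z * Real.log (W1 x y * W2 x y z)
          - W1' x y * W2' x y z * Real.log (W1' x y * W2' x y z)))|
        ≤ ∑ x, |P x * (∑ y, ∑ z, (W1 x y * W2 x y z * Real.log (W1 x y * W2 x y z)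
          - W1' x y * W2' x y z * Real.log (W1' x y * W2' x y z)))| :=
          Finset.abs_sum_le_sum_abs _ _
      _ = ∑ x, P x * |∑ y, ∑ z, (W1 x y * W2 x y z * Real.log (W1 x y * W2 x y z)
          - W1' x y * W2' x y z * Real.log (W1' x y * W2' x y z))| :=
          Finset.sum_congr rfl fun x _ => by rw [abs_mul, abs_of_nonneg (hP0 x)]
      _ ≤ ∑ x, P x * (∑ y, ∑ z, |W1 x y * W2 x y z * Real.log (W1 x y * W2 x y z)
          - W1' x y * W2' x y z * Real.log (W1' x y * W2' x y z)|) := by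
          refine Finset.sum_le_sum fun x _ => mul_le_mul_of_nonneg_left ?_ (hP0 x)
          calc |∑ y, ∑ z, (W1 x y * W2 x y z * Real.log (W1 x y * W2 x y z)
              - W1' x y * W2' x y z * Real.log (W1' x y * W2' x y z))|
              ≤ ∑ y, |∑ z, (W1 x y * W2 x y z * Real.log (W1 x y * W2 x y z)
              - W1' x y * W2' x y z * Real.log (W1' x y * W2' x y z))| :=
                Finset.abs_sum_le_sum_abs _ _
            _ ≤ ∑ y, ∑ z, |W1 x y * W2 x y z * Real.log (W1 x y * W2 x y z)
              - W1' x y * W2' x y z * Real.log (W1' x y * W2' x y z)| :=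
                Finset.sum_le_sum fun y _ => Finset.abs_sum_le_sum_abs _ _
      _ = ∑ x, ∑ y, ∑ z, P x * |W1 x y * W2 x y z * Real.log (W1 x y * W2 x y z)
          - W1' x y * W2' x y z * Real.log (W1' x y * W2' x y z)| := by
          simp [Finset.mul_sum]
      _ ≤ ∑ _x : X, ∑ _y : X1, ∑ _z : X2, 2 / (n:ℝ) * L :=
          Finset.sum_le_sum fun x _ => Finset.sum_le_sum fun y _ =>
            Finset.sum_le_sum fun z _ => hterm2 x y z
      _ = cX * (cX1 * cX2 * (2 / n * L)) := by
          simp [Finset.sum_const, Finset.card_univ, nsmul_eq_mul]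
          ring
  calc |(∑ y, ∑ z, ((∑ x, P x * W1' x y * W2' x y z) *
            Real.log (∑ x, P x * W1' x y * W2' x y z)
          - (∑ x, P x * W1 x y * W2 x y z) *
            Real.log (∑ x, P x * W1 x y * W2 x y z)))
        + ∑ x, P x * (∑ y, ∑ z, (W1 x y * W2 x y z * Real.log (W1 x y * W2 x y z)
          - W1' x y * W2' x y z * Real.log (W1' x y * W2' x y z)))|
      ≤ |∑ y, ∑ z, ((∑ x, P x * W1' x y * W2' x y z) *
            Real.log (∑ x, P x * W1' x y * W2' x y z)
          - (∑ x, P x * W1 x y * W2 x y z) *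
            Real.log (∑ x, P x * W1 x y * W2 x y z))|
        + |∑ x, P x * (∑ y, ∑ z, (W1 x y * W2 x y z * Real.log (W1 x y * W2 x y z)
          - W1' x y * W2' x y z * Real.log (W1' x y * W2' x y z)))| := abs_add_le _ _
    _ ≤ cX1 * cX2 * (2 * cX / n * L) + cX * (cX1 * cX2 * (2 / n * L)) := add_le_add hS1 hS2
    _ = 4 * (cX * cX1 * cX2) / n * L := by ring
end
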